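/- arXiv:2404.10986 — 2 statements merged into one kernel-verified Lean document; each statement's English description precedes it below -/
import Mathlib

section
/- Let N ≥ 2 and let Δ : ℝ^N × ℝ → ℝ^N be a C² map, written componentwise Δ = (Δ₁, …, Δ_N). Assume that Δ_i(z, 0) = 0 for all z ∈ ℝ^N and all i = 1, …, N−1. Define M_i(z) = ∂Δ_i/∂ε(z, 0) for i = 1, …, N−1 and g(z) = Δ_N(z, 0). Suppose there exists z* ∈ ℝ^N with M_i(z*) = 0 for i = 1, …, N−1, g(z*) = 0, and the Jacobian determinant at z* of the map z ↦ (M₁(z), …, M_{N−1}(z), g(z)) is nonzero. Then there exist ε₀ > 0 and a C¹ curve ε ↦ z*(ε) defined for |ε| < ε₀ with z*(0) = z* and Δ(z*(ε), ε) = 0 for every |ε| < ε₀. (This is the non-degenerate case of the paper's main existence theorem, where g(z) = Ω(I₀)nT mod T and dΩ_I/dI(I₀*) ≠ 0.) -/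
/-!
Since `Δᵢ(z, 0) = 0` for `i < N`, Hadamard's lemma `Δᵢ(z, ε) = ε ∫₀¹ ∂_ε Δᵢ(z, tε) dt` shows
that dividing these components by `ε` yields a map `G` which is still `C¹` (one derivative is
lost) and satisfies `G(·, 0) = (M₁, …, M_{N-1}, g)`. So `z*` is a nondegenerate zero of
`G(·, 0)`, the implicit function theorem gives a `C¹` curve of zeros of `G` through `(z*, 0)`,
and zeros of `G` are zeros of `Δ`.
-/

open Set Filter Topology
open scoped ContDiff

section

variable {E F : Type*} [NormedAddCommGroup E] [NormedSpace ℝ E]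
  [NormedAddCommGroup F] [NormedSpace ℝ F]

theorem contDiff_one_parametric_intervalIntegral [ProperSpace E] [CompleteSpace F]
    {f : E × ℝ → F} (hf : ContDiff ℝ 1 f) (a b : ℝ) :
    ContDiff ℝ 1 fun x : E => ∫ t in a..b, f (x, t) := by
  set f' : E × ℝ → E →L[ℝ] F := fun q => fderiv ℝ f q ∘L .inl ℝ E ℝ
  have hf' : Continuous f' := (hf.continuous_fderiv one_ne_zero).clm_comp continuous_const
  have hpartial (x : E) (t : ℝ) : HasFDerivAt (fun y => f (y, t)) (f' (x, t)) x :=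
    (hf.differentiable one_ne_zero (x, t)).hasFDerivAt.comp x (hasFDerivAt_prodMk_left x t)
  have hderiv (x₀ : E) :
      HasFDerivAt (fun x => ∫ t in a..b, f (x, t)) (∫ t in a..b, f' (x₀, t)) x₀ := by
    obtain ⟨C, hC⟩ := ((isCompact_closedBall x₀ 1).prod isCompact_uIcc).exists_bound_of_continuousOn
      hf'.continuousOn
    refine intervalIntegral.hasFDerivAt_integral_of_dominated_of_fderiv_le
      (F' := fun x t => f' (x, t)) (bound := fun _ => C) (Metric.ball_mem_nhds x₀ one_pos)
      (.of_forall fun x => (hf.continuous.comp (.prodMk_right x)).aestronglyMeasurable)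
      ((hf.continuous.comp (.prodMk_right x₀)).intervalIntegrable a b)
      (hf'.comp (.prodMk_right x₀)).aestronglyMeasurable ?_ intervalIntegrable_const
      (.of_forall fun t _ x _ => hpartial x t)
    exact .of_forall fun t ht x hx =>
      hC (x, t) ⟨Metric.ball_subset_closedBall hx, uIoc_subset_uIcc ht⟩
  rw [contDiff_one_iff_fderiv, funext fun x => (hderiv x).fderiv]
  exact ⟨fun x => (hderiv x).differentiableAt,
    intervalIntegral.continuous_parametric_intervalIntegral_of_continuous'
      (f := fun x t => f' (x, t)) hf' a b⟩

theorem contDiff_deriv_snd {n : WithTop ℕ∞} {f : E → ℝ → F}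
    (hf : ContDiff ℝ (n + 1) fun q : E × ℝ => f q.1 q.2) :
    ContDiff ℝ n fun q : E × ℝ => deriv (f q.1) q.2 := by
  have hpartial (q : E × ℝ) :
      deriv (f q.1) q.2 = fderiv ℝ (fun q : E × ℝ => f q.1 q.2) q (0, 1) :=
    ((hf.differentiable (by simp) q).hasFDerivAt.comp_hasDerivAt_of_eq q.2
      ((hasDerivAt_const q.2 q.1).prodMk (hasDerivAt_id q.2)) rfl).deriv
  simp_rw [hpartial]
  exact (hf.fderiv_right le_rfl).clm_apply contDiff_const

/-- Hadamard's quotient: `(g ε - g 0) / ε`, continued to `ε = 0` by `g' 0`. -/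
noncomputable def integralSlope (g : ℝ → F) (ε : ℝ) : F :=
  ∫ t in (0 : ℝ)..1, deriv g (t * ε)

@[simp]
theorem integralSlope_zero [CompleteSpace F] (g : ℝ → F) : integralSlope g 0 = deriv g 0 := by
  simp [integralSlope]

theorem smul_integralSlope [CompleteSpace F] {g : ℝ → F} (hg : ContDiff ℝ 1 g) (ε : ℝ) :
    ε • integralSlope g ε = g ε - g 0 := by
  rw [integralSlope, intervalIntegral.smul_integral_comp_mul_right, zero_mul, one_mul]
  exact intervalIntegral.integral_eq_sub_of_hasDerivAt
    (fun s _ => (hg.differentiable one_ne_zero s).hasDerivAt)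
    ((hg.continuous_deriv le_rfl).intervalIntegrable _ _)

theorem contDiff_integralSlope [ProperSpace E] [CompleteSpace F] {f : E → ℝ → F}
    (hf : ContDiff ℝ 2 fun q : E × ℝ => f q.1 q.2) :
    ContDiff ℝ 1 fun q : E × ℝ => integralSlope (f q.1) q.2 :=
  contDiff_one_parametric_intervalIntegral
    ((contDiff_deriv_snd hf).comp ((contDiff_fst.comp contDiff_fst).prodMk
      (contDiff_snd.mul (contDiff_snd.comp contDiff_fst)))) 0 1

theorem exists_contDiffOn_curve_of_fderiv_isInvertible [CompleteSpace E] [CompleteSpace F]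
    {n : WithTop ℕ∞} (hn0 : n ≠ 0) (hn : n ≠ ∞) {G : E → ℝ → F} {z₀ : E}
    (hG : ContDiffAt ℝ n (fun q : E × ℝ => G q.1 q.2) (z₀, 0)) (hz₀ : G z₀ 0 = 0)
    (hinv : (fderiv ℝ (fun z => G z 0) z₀).IsInvertible) :
    ∃ ε₀ > (0 : ℝ), ∃ zc : ℝ → E,
      ContDiffOn ℝ n zc (Ioo (-ε₀) ε₀) ∧ zc 0 = z₀ ∧ ∀ ε : ℝ, |ε| < ε₀ → G (zc ε) ε = 0 := by
  set H : ℝ × E → F := fun q => G q.2 q.1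
  have hH : ContDiffAt ℝ n H (0, z₀) :=
    hG.comp (0, z₀) (contDiff_snd.prodMk contDiff_fst).contDiffAt
  have hH' : fderiv ℝ H (0, z₀) ∘L .inr ℝ ℝ E = fderiv ℝ (fun z => G z 0) z₀ :=
    ((hH.differentiableAt hn0).hasFDerivAt.comp z₀ (hasFDerivAt_prodMk_right 0 z₀)).fderiv.symm
  rw [← hH'] at hinv
  set ψ := hH.implicitFunction hn0 hinv
  have hψ : ∀ᶠ ε in 𝓝 0, ContDiffAt ℝ n ψ ε ∧ G (ψ ε) ε = 0 := by
    refine ((hH.contDiffAt_implicitFunction hn0 hinv).eventually hn).and ?_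
    simpa [H, hz₀] using hH.eventually_apply_implicitFunction hn0 hinv
  obtain ⟨r, hr, hball⟩ := Metric.eventually_nhds_iff.1 hψ
  have habs {ε : ℝ} (hε : |ε| < r) : dist ε 0 < r := by rwa [Real.dist_0_eq_abs]
  refine ⟨r, hr, ψ, fun ε hε => ?_, hH.implicitFunction_apply_self hn0 hinv,
    fun ε hε => (hball (habs hε)).2⟩
  exact (hball (habs (abs_lt.2 hε))).1.contDiffWithinAt

end

section

variable {E ι : Type*} (p : ι → Prop) [DecidablePred p]

noncomputable def melnikovMap (Δ : E → ℝ → ι → ℝ) (z : E) : ι → ℝ :=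
  fun i => if p i then deriv (fun ε => Δ z ε i) 0 else Δ z 0 i

noncomputable def rescaledDisplacement (Δ : E → ℝ → ι → ℝ) (z : E) (ε : ℝ) : ι → ℝ :=
  fun i => if p i then integralSlope (fun ε => Δ z ε i) ε else Δ z ε i

theorem rescaledDisplacement_zero (Δ : E → ℝ → ι → ℝ) (z : E) :
    rescaledDisplacement p Δ z 0 = melnikovMap p Δ z := by
  funext i
  simp [rescaledDisplacement, melnikovMap]

variable [NormedAddCommGroup E] [NormedSpace ℝ E] [Fintype ι]

theorem contDiff_rescaledDisplacement [ProperSpace E] {Δ : E → ℝ → ι → ℝ}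
    (hΔ : ContDiff ℝ 2 fun q : E × ℝ => Δ q.1 q.2) :
    ContDiff ℝ 1 fun q : E × ℝ => rescaledDisplacement p Δ q.1 q.2 := by
  refine contDiff_pi.2 fun i => ?_
  by_cases hi : p i
  · simpa [rescaledDisplacement, hi] using
      contDiff_integralSlope (f := fun z ε => Δ z ε i) (contDiff_pi.1 hΔ i)
  · simpa [rescaledDisplacement, hi] using contDiff_pi.1 (hΔ.of_le one_le_two) i

theorem eq_zero_of_rescaledDisplacement_eq_zero {Δ : E → ℝ → ι → ℝ}
    (hΔ : ContDiff ℝ 1 fun q : E × ℝ => Δ q.1 q.2) (hΔ0 : ∀ z i, p i → Δ z 0 i = 0)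
    {z : E} {ε : ℝ} (h : rescaledDisplacement p Δ z ε = 0) : Δ z ε = 0 := by
  funext i
  have hi := congrFun h i
  by_cases hpi : p i
  · have hg : ContDiff ℝ 1 fun ε => Δ z ε i :=
      (contDiff_apply ℝ ℝ i).comp (hΔ.comp (contDiff_const.prodMk contDiff_id))
    simp only [rescaledDisplacement, hpi, if_true, Pi.zero_apply] at hi
    simpa [hΔ0 z i hpi, hi] using (smul_integralSlope hg ε).symm
  · simpa [rescaledDisplacement, hpi] using hi

theorem exists_contDiffOn_zero_curve_of_melnikovMap [ProperSpace E]
    {Δ : E → ℝ → ι → ℝ} (hΔ : ContDiff ℝ 2 fun q : E × ℝ => Δ q.1 q.2)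
    (hΔ0 : ∀ z i, p i → Δ z 0 i = 0) {z₀ : E} (hz₀ : melnikovMap p Δ z₀ = 0)
    (hinv : (fderiv ℝ (melnikovMap p Δ) z₀).IsInvertible) :
    ∃ ε₀ > (0 : ℝ), ∃ zc : ℝ → E,
      ContDiffOn ℝ 1 zc (Ioo (-ε₀) ε₀) ∧ zc 0 = z₀ ∧ ∀ ε : ℝ, |ε| < ε₀ → Δ (zc ε) ε = 0 := by
  have hG0 : (fun z => rescaledDisplacement p Δ z 0) = melnikovMap p Δ :=
    funext (rescaledDisplacement_zero p Δ)
  obtain ⟨ε₀, hε₀, zc, hzc, hzc0, hzero⟩ := exists_contDiffOn_curve_of_fderiv_isInvertible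
    one_ne_zero (by simp) (contDiff_rescaledDisplacement p hΔ).contDiffAt
    (by rw [rescaledDisplacement_zero, hz₀]) (by rwa [hG0])
  exact ⟨ε₀, hε₀, zc, hzc, hzc0, fun ε hε =>
    eq_zero_of_rescaledDisplacement_eq_zero p (hΔ.of_le one_le_two) hΔ0 (hzero ε hε)⟩

end

/-- Non-degenerate case of the main existence theorem: the first `N-1`
components of the displacement function vanish at `ε = 0`; if the map
`z ↦ (M₁(z), …, M_{N-1}(z), g(z))` (Melnikov components together with the
`ε⁰`-part `g` of the last component) has a nondegenerate zero `z*`, then zeros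
of `Δ` persist as a C¹ curve `ε ↦ z*(ε)`. -/
theorem nondegenerate_melnikov_existence
    (N : ℕ) (hN : 2 ≤ N)
    (Δ : (Fin N → ℝ) → ℝ → (Fin N → ℝ))
    (hΔ : ContDiff ℝ 2 (fun p : (Fin N → ℝ) × ℝ => Δ p.1 p.2))
    (hΔ0 : ∀ z : Fin N → ℝ, ∀ i : Fin N, (i : ℕ) + 1 < N → Δ z 0 i = 0)
    (zstar : Fin N → ℝ)
    (hM : ∀ i : Fin N, (i : ℕ) + 1 < N → deriv (fun ε => Δ zstar ε i) 0 = 0)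
    (hg : Δ zstar 0 ⟨N - 1, by omega⟩ = 0)
    (hjac : LinearMap.det
        (fderiv ℝ
          (fun z : Fin N → ℝ => fun i : Fin N =>
            if (i : ℕ) + 1 < N then deriv (fun ε => Δ z ε i) 0 else Δ z 0 i)
          zstar).toLinearMap ≠ 0) :
    ∃ ε₀ > (0 : ℝ), ∃ zc : ℝ → (Fin N → ℝ),
      ContDiffOn ℝ 1 zc (Set.Ioo (-ε₀) ε₀) ∧
      zc 0 = zstar ∧
      ∀ ε : ℝ, |ε| < ε₀ → Δ (zc ε) ε = 0 := by
  have hz : melnikovMap (fun i : Fin N => (i : ℕ) + 1 < N) Δ zstar = 0 := by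
    funext i
    by_cases hi : (i : ℕ) + 1 < N
    · simpa [melnikovMap, hi] using hM i hi
    · have hlast : i = ⟨N - 1, by omega⟩ := Fin.ext (by have := i.isLt; simp only; omega)
      simp only [melnikovMap, if_neg hi, Pi.zero_apply]
      rw [hlast]
      exact hg
  exact exists_contDiffOn_zero_curve_of_melnikovMap _ hΔ hΔ0 hz
    ⟨_, ContinuousLinearMap.coe_toContinuousLinearEquivOfDetNeZero _ hjac⟩
end

section
/- Let a₁ > 0, a₂ < 0, a₃ > 0 and let x₁, x₂, x₃ : ℝ → ℝ be differentiable functions satisfying the generalized Euler system x₁′(t) = a₁ x₂(t) x₃(t), x₂′(t) = a₂ x₁(t) x₃(t), x₃′(t) = a₃ x₁(t) x₂(t) for all t ∈ ℝ. Set h₁⁰ = a₂ x₃(0)² − a₃ x₂(0)² and h₃⁰ = a₁ x₂(0)² − a₂ x₁(0)². Then for all t ∈ ℝ: (−a₂)·x₁(t)² ≤ h₃⁰, a₁·x₂(t)² ≤ h₃⁰, and (−a₂)·x₃(t)² ≤ −h₁⁰. In particular, every solution of the generalized Euler system with a₁a₂a₃ < 0 (arranged so that a₁ > 0, a₂ <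 0, a₃ > 0) is bounded. -/
/-! Along a solution, `h₃ = a₁x₂² − a₂x₁²` and `h₁ = a₂x₃² − a₃x₂²` are constant, since
`a u u' = b v v'` makes `a u² − b v²` have derivative zero. For `a₁ > 0 > a₂` and `a₃ > 0`,
`h₃` and `−h₁` are sums of nonnegative terms, so each term is bounded by the initial value. -/

theorem quadratic_form_eq_of_hasDerivAt {u v u' v' : ℝ → ℝ} {a b : ℝ}
    (hu : ∀ t, HasDerivAt u (u' t) t) (hv : ∀ t, HasDerivAt v (v' t) t)
    (h : ∀ t, a * u t * u' t = b * v t * v' t) (t s : ℝ) :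
    a * u t ^ 2 - b * v t ^ 2 = a * u s ^ 2 - b * v s ^ 2 := by
  have hderiv : ∀ t, HasDerivAt (fun t => a * u t ^ 2 - b * v t ^ 2) 0 t := fun t =>
    ((((hu t).pow 2).const_mul a).sub (((hv t).pow 2).const_mul b)).congr_deriv
      (by linear_combination 2 * h t)
  exact is_const_of_deriv_eq_zero (fun t => (hderiv t).differentiableAt)
    (fun t => (hderiv t).deriv) t s

/-- Boundedness of solutions of the generalized Euler system with
`a₁ > 0, a₂ < 0, a₃ > 0`: the first integrals `h₃` and `−h₁` dominate the
squares of the coordinates along every solution. -/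
theorem generalized_euler_bounded_solutions
    (a₁ a₂ a₃ : ℝ) (ha₁ : 0 < a₁) (ha₂ : a₂ < 0) (ha₃ : 0 < a₃)
    (x₁ x₂ x₃ : ℝ → ℝ)
    (hx₁ : ∀ t : ℝ, HasDerivAt x₁ (a₁ * x₂ t * x₃ t) t)
    (hx₂ : ∀ t : ℝ, HasDerivAt x₂ (a₂ * x₁ t * x₃ t) t)
    (hx₃ : ∀ t : ℝ, HasDerivAt x₃ (a₃ * x₁ t * x₂ t) t) :
    ∀ t : ℝ,
      (-a₂) * x₁ t ^ 2 ≤ a₁ * x₂ 0 ^ 2 - a₂ * x₁ 0 ^ 2 ∧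
      a₁ * x₂ t ^ 2 ≤ a₁ * x₂ 0 ^ 2 - a₂ * x₁ 0 ^ 2 ∧
      (-a₂) * x₃ t ^ 2 ≤ -(a₂ * x₃ 0 ^ 2 - a₃ * x₂ 0 ^ 2) := by
  intro t
  have h₃ := quadratic_form_eq_of_hasDerivAt (a := a₁) (b := a₂) hx₂ hx₁ (fun t => by ring) t 0
  have h₁ := quadratic_form_eq_of_hasDerivAt (a := a₂) (b := a₃) hx₃ hx₂ (fun t => by ring) t 0
  have ha₂x₁_sq : 0 ≤ -a₂ * x₁ t ^ 2 := mul_nonneg (by linarith) (sq_nonneg _)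
  have ha₁x₂_sq : 0 ≤ a₁ * x₂ t ^ 2 := by positivity
  have ha₃x₂_sq : 0 ≤ a₃ * x₂ t ^ 2 := by positivity
  exact ⟨by linarith, by linarith, by linarith⟩
end
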